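/- Let P and Q be Borel probability measures on ℝ^d such that liminf_{r→0} P(B(x,r))/r^d > 0 for every x ∈ supp(P) and liminf_{r→0} Q(B(y,r))/r^d > 0 for every y ∈ supp(Q). Let K : ℝ^d → ℝ be a nonnegative, compactly supported kernel with K(0) > 0 that is continuous at 0. Let {h_n}, {h_m} be positive bandwidths tending to 0, and let {c_n}, {c_m} be nonnegative real sequences tending to 0. Define B_{n,m} = (supp(P) \ p_{h_n}^{-1}([2c_n, ∞))) ∪ q_{h_m}^{-1}((0, 2c_m)) ∪ (supp(p_{h_n}) \ supp(P)), where p_h and q_h are the average kernel density estimators of P and Q respectively. Then B_{n,m} decreases to the empty set pointwise, and in particular Q(B_{n,m}) → 0 as n, m → ∞. -/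

import Mathlib

open MeasureTheory Metric Filter
open scoped ENNReal

/-- The support of a measure `P`: points all of whose neighborhoods have positive mass. -/
def msupp {d : ℕ} (P : Measure (EuclideanSpace ℝ (Fin d))) : Set (EuclideanSpace ℝ (Fin d)) :=
  {x | ∀ r > 0, 0 < P (ball x r)}

/-- The average kernel density estimator `p_h(x) = ∫ h^{-d} K((x-y)/h) dP(y)`
(for a nonnegative kernel, as a Lebesgue integral). -/
noncomputable def avgKDE {d : ℕ} (P : Measure (EuclideanSpace ℝ (Fin d)))
    (K : EuclideanSpace ℝ (Fin d) → ℝ) (h : ℝ) (x : EuclideanSpace ℝ (Fin d)) : ℝ≥0∞ :=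
  ∫⁻ y, ENNReal.ofReal ((1 / h ^ d) * K (h⁻¹ • (x - y))) ∂P

/-- The set `B_{n,m} = (supp(P) \ p_{h_n}^{-1}[2c_n, ∞)) ∪ q_{h_m}^{-1}(0, 2c'_m)
∪ (supp(p_{h_n}) \ supp(P))`. -/
noncomputable def Bnm {d : ℕ} (P Q : Measure (EuclideanSpace ℝ (Fin d)))
    (K : EuclideanSpace ℝ (Fin d) → ℝ) (h hm : ℕ → ℝ) (c c' : ℕ → ℝ) (n m : ℕ) :
    Set (EuclideanSpace ℝ (Fin d)) :=
  (msupp P \ {x | ENNReal.ofReal (2 * c n) ≤ avgKDE P K (h n) x}) ∪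
    {x | 0 < avgKDE Q K (hm m) x ∧ avgKDE Q K (hm m) x < ENNReal.ofReal (2 * c' m)} ∪
    (Function.support (avgKDE P K (h n)) \ msupp P)

open Topology

/-! At a point of `supp P`, the lower density bound together with `K ≥ K 0 / 2` near `0` gives
`p_h(x) ≥ b > 0` for all small `h`, which eventually beats `2 c_n`; off `supp P`, the compact
support of `K` makes `p_h(x) = 0` for all small `h`. The same dichotomy for `q_h` keeps `x` out of
the middle set, so every point eventually leaves `B_{n,m}`, and `Q(B_{n,m}) → 0` by dominated
convergence of the indicators. -/

section KernelDensity

variable {d : ℕ} {K : EuclideanSpace ℝ (Fin d) → ℝ}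

lemma isClosed_msupp (μ : Measure (EuclideanSpace ℝ (Fin d))) : IsClosed (msupp μ) := by
  rw [← isOpen_compl_iff, Metric.isOpen_iff]
  intro x hx
  simp only [msupp, Set.mem_compl_iff, Set.mem_ofPred_eq, not_forall, not_lt] at hx
  obtain ⟨r, hr, hμr⟩ := hx
  refine ⟨r / 2, half_pos hr, fun y hy => ?_⟩
  simp only [msupp, Set.mem_compl_iff, Set.mem_ofPred_eq, not_forall, not_lt]
  have hsub : ball y (r / 2) ⊆ ball x r :=
    ball_subset_ball' (by rw [mem_ball] at hy; linarith)
  exact ⟨r / 2, half_pos hr, (measure_mono hsub).trans hμr⟩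

lemma measurable_avgKDE (μ : Measure (EuclideanSpace ℝ (Fin d))) [SFinite μ]
    (hK : Measurable K) (h : ℝ) : Measurable (avgKDE μ K h) :=
  (ENNReal.measurable_ofReal.comp (measurable_const.mul
    (hK.comp ((measurable_fst.sub measurable_snd).const_smul h⁻¹)))).lintegral_prod_right'

lemma measurableSet_Bnm (P Q : Measure (EuclideanSpace ℝ (Fin d))) [SFinite P] [SFinite Q]
    (hK : Measurable K) (h hm c c' : ℕ → ℝ) (n m : ℕ) :
    MeasurableSet (Bnm P Q K h hm c c' n m) := by
  have hP := measurable_avgKDE P hK (h n)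
  have hQ := measurable_avgKDE Q hK (hm m)
  have hsupp := (isClosed_msupp P).measurableSet
  refine ((hsupp.diff (measurableSet_le measurable_const hP)).union ?_).union ?_
  · exact (measurableSet_lt measurable_const hQ).inter (measurableSet_lt hQ measurable_const)
  · exact (hP (measurableSet_singleton 0).compl).diff hsupp

lemma avgKDE_eq_zero_of_measure_ball_eq_zero {μ : Measure (EuclideanSpace ℝ (Fin d))}
    {x : EuclideanSpace ℝ (Fin d)} {R h r : ℝ} (hKR : tsupport K ⊆ closedBall 0 R)
    (hh : 0 < h) (hhR : h * R < r) (hμ : μ (ball x r) = 0) : avgKDE μ K h x = 0 := by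
  have hvanish : ∀ y ∉ ball x r, K (h⁻¹ • (x - y)) = 0 := by
    intro y hy
    refine image_eq_zero_of_notMem_tsupport fun hmem => ?_
    have hle : ‖h⁻¹ • (x - y)‖ ≤ R := by simpa using hKR hmem
    have hlt : h * R < h * ‖h⁻¹ • (x - y)‖ := by
      rw [norm_smul, norm_inv, Real.norm_of_nonneg hh.le, mul_inv_cancel_left₀ hh.ne',
        ← dist_eq_norm, dist_comm]
      exact hhR.trans_le (not_lt.1 hy)
    exact (lt_of_mul_lt_mul_left hlt hh.le).not_ge hle
  calc avgKDE μ K h x = ∫⁻ _, 0 ∂μ :=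
        lintegral_congr_ae <| (measure_eq_zero_iff_ae_notMem.1 hμ).mono fun y hy => by
          simp [hvanish y hy]
    _ = 0 := lintegral_zero

lemma eventually_avgKDE_eq_zero {ι : Type*} {l : Filter ι} {s : ι → ℝ}
    {μ : Measure (EuclideanSpace ℝ (Fin d))} {x : EuclideanSpace ℝ (Fin d)}
    (hKsupp : HasCompactSupport K) (hs : Tendsto s l (𝓝[>] 0)) (hx : x ∉ msupp μ) :
    ∀ᶠ i in l, avgKDE μ K (s i) x = 0 := by
  simp only [msupp, Set.mem_ofPred_eq, not_forall, not_lt, nonpos_iff_eq_zero] at hx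
  obtain ⟨r, hr, hμr⟩ := hx
  obtain ⟨R, hKR⟩ := hKsupp.isBounded.subset_closedBall 0
  have hsR : ∀ᶠ i in l, s i * R < r :=
    ((tendsto_nhds_of_tendsto_nhdsWithin hs).mul_const R).eventually_lt_const (by simpa using hr)
  filter_upwards [eventually_mem_of_tendsto_nhdsWithin hs, hsR] with i hpos hlt
  exact avgKDE_eq_zero_of_measure_ball_eq_zero hKR hpos hlt hμr

lemma ofReal_div_pow_mul_measure_ball_le_avgKDE (μ : Measure (EuclideanSpace ℝ (Fin d)))
    (x : EuclideanSpace ℝ (Fin d)) {k ε h : ℝ} (hK : ∀ z ∈ ball 0 ε, k ≤ K z) (hh : 0 < h) :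
    ENNReal.ofReal (k / h ^ d) * μ (ball x (ε * h)) ≤ avgKDE μ K h x := by
  have hpointwise : ∀ y ∈ ball x (ε * h),
      ENNReal.ofReal (k / h ^ d) ≤ ENNReal.ofReal ((1 / h ^ d) * K (h⁻¹ • (x - y))) := by
    intro y hy
    rw [one_div_mul_eq_div]
    refine ENNReal.ofReal_le_ofReal (div_le_div_of_nonneg_right (hK _ ?_) (by positivity))
    rw [mem_ball, dist_zero_right, norm_smul, norm_inv, Real.norm_of_nonneg hh.le,
      inv_mul_lt_iff₀ hh, ← dist_eq_norm, dist_comm, mul_comm]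
    exact hy
  calc ENNReal.ofReal (k / h ^ d) * μ (ball x (ε * h))
      = ∫⁻ _ in ball x (ε * h), ENNReal.ofReal (k / h ^ d) ∂μ := (setLIntegral_const _ _).symm
    _ ≤ ∫⁻ y in ball x (ε * h), ENNReal.ofReal ((1 / h ^ d) * K (h⁻¹ • (x - y))) ∂μ :=
        setLIntegral_mono' measurableSet_ball hpointwise
    _ ≤ avgKDE μ K h x := setLIntegral_le_lintegral _ _


lemma eventually_ofReal_lt_avgKDE {ι : Type*} {l : Filter ι} {s u : ι → ℝ}
    {μ : Measure (EuclideanSpace ℝ (Fin d))} {x : EuclideanSpace ℝ (Fin d)}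
    (hKpos : 0 < K 0) (hKcont : ContinuousAt K 0) (hs : Tendsto s l (𝓝[>] 0))
    (hu : Tendsto u l (𝓝 0))
    (hx : 0 < liminf (fun r : ℝ => μ (ball x r) / ENNReal.ofReal (r ^ d)) (𝓝[>] 0)) :
    ∀ᶠ i in l, ENNReal.ofReal (u i) < avgKDE μ K (s i) x := by
  obtain ⟨ε, hε, hKε⟩ : ∃ ε > 0, ∀ z ∈ ball 0 ε, K 0 / 2 ≤ K z :=
    Metric.eventually_nhds_iff.1 (hKcont.eventually (eventually_ge_nhds (half_lt_self hKpos)))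
  obtain ⟨a, ha, haμ⟩ := exists_between hx
  have hspos : ∀ᶠ i in l, 0 < s i := eventually_mem_of_tendsto_nhdsWithin hs
  have hεs : Tendsto (fun i => ε * s i) l (𝓝[>] 0) :=
    tendsto_nhdsWithin_iff.2 ⟨by simpa using (tendsto_nhds_of_tendsto_nhdsWithin hs).const_mul ε,
      hspos.mono fun i hi => mul_pos hε hi⟩
  have hball : ∀ᶠ i in l, a * ENNReal.ofReal ((ε * s i) ^ d) ≤ μ (ball x (ε * s i)) := by
    filter_upwards [hεs.eventually (eventually_lt_of_lt_liminf haμ), hspos] with i hi hpos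
    refine (ENNReal.le_div_iff_mul_le (Or.inl ?_) (Or.inl ENNReal.ofReal_ne_top)).1 hi.le
    simpa using pow_pos (mul_pos hε hpos) d
  set b := a * ENNReal.ofReal (K 0 / 2 * ε ^ d) with hb_def
  have hb : 0 < b := ENNReal.mul_pos ha.ne' (by simpa using by positivity)
  have hu' : Tendsto (fun i => ENNReal.ofReal (u i)) l (𝓝 0) := by
    simpa using ENNReal.tendsto_ofReal hu
  filter_upwards [hu'.eventually_lt_const hb, hspos, hball] with i hui hpos hi
  refine hui.trans_le ?_
  calc b = ENNReal.ofReal (K 0 / 2 / s i ^ d) * (a * ENNReal.ofReal ((ε * s i) ^ d)) := by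
        rw [hb_def, mul_left_comm, ← ENNReal.ofReal_mul (by positivity), mul_pow]
        congr 2
        field_simp
    _ ≤ ENNReal.ofReal (K 0 / 2 / s i ^ d) * μ (ball x (ε * s i)) := by gcongr
    _ ≤ avgKDE μ K (s i) x := ofReal_div_pow_mul_measure_ball_le_avgKDE μ x hKε hpos


lemma eventually_notMem_Bnm {P Q : Measure (EuclideanSpace ℝ (Fin d))}
    (hP : ∀ x ∈ msupp P, 0 < liminf (fun r : ℝ => P (ball x r) / ENNReal.ofReal (r ^ d)) (𝓝[>] 0))
    (hQ : ∀ y ∈ msupp Q, 0 < liminf (fun r : ℝ => Q (ball y r) / ENNReal.ofReal (r ^ d)) (𝓝[>] 0))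
    (hKpos : 0 < K 0) (hKcont : ContinuousAt K 0) (hKsupp : HasCompactSupport K)
    {h hm c c' : ℕ → ℝ} (hh : Tendsto h atTop (𝓝[>] 0)) (hhm : Tendsto hm atTop (𝓝[>] 0))
    (hc : Tendsto c atTop (𝓝 0)) (hc' : Tendsto c' atTop (𝓝 0)) (x : EuclideanSpace ℝ (Fin d)) :
    ∀ᶠ nm : ℕ × ℕ in atTop, x ∉ Bnm P Q K h hm c c' nm.1 nm.2 := by
  have hP_eventually : ∀ᶠ n in atTop, (x ∈ msupp P → ENNReal.ofReal (2 * c n) ≤ avgKDE P K (h n) x)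
      ∧ (avgKDE P K (h n) x = 0 ∨ x ∈ msupp P) := by
    by_cases hx : x ∈ msupp P
    · filter_upwards [eventually_ofReal_lt_avgKDE hKpos hKcont hh
        (by simpa using hc.const_mul 2) (hP x hx)] with n hn using ⟨fun _ => hn.le, Or.inr hx⟩
    · filter_upwards [eventually_avgKDE_eq_zero hKsupp hh hx] with n hn
        using ⟨(absurd · hx), Or.inl hn⟩
  have hQ_eventually : ∀ᶠ m in atTop,
      avgKDE Q K (hm m) x = 0 ∨ ENNReal.ofReal (2 * c' m) ≤ avgKDE Q K (hm m) x := by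
    by_cases hx : x ∈ msupp Q
    · filter_upwards [eventually_ofReal_lt_avgKDE hKpos hKcont hhm
        (by simpa using hc'.const_mul 2) (hQ x hx)] with m hm using Or.inr hm.le
    · filter_upwards [eventually_avgKDE_eq_zero hKsupp hhm hx] with m hm using Or.inl hm
  rw [← prod_atTop_atTop_eq]
  filter_upwards [hP_eventually.prod_mk hQ_eventually] with ⟨n, m⟩ ⟨⟨hPsupp, hPzero⟩, hQm⟩
  rintro ((⟨hx, hlt⟩ | ⟨hpos, hlt⟩) | ⟨hne, hx⟩)
  · exact hlt (hPsupp hx)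
  · rcases hQm with hzero | hle
    exacts [hpos.ne' hzero, hlt.not_ge hle]
  · exact hPzero.elim hne hx

end KernelDensity

theorem stmt15_general {d : ℕ} (P Q : Measure (EuclideanSpace ℝ (Fin d)))
    [IsProbabilityMeasure P] [IsProbabilityMeasure Q]
    (hP : ∀ x ∈ msupp P,
      0 < liminf (fun r : ℝ => P (ball x r) / ENNReal.ofReal (r ^ d))
        (nhdsWithin (0 : ℝ) (Set.Ioi 0)))
    (hQ : ∀ y ∈ msupp Q,
      0 < liminf (fun r : ℝ => Q (ball y r) / ENNReal.ofReal (r ^ d))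
        (nhdsWithin (0 : ℝ) (Set.Ioi 0)))
    (K : EuclideanSpace ℝ (Fin d) → ℝ) (hK_meas : Measurable K)
    (hKpos : 0 < K 0) (hKcont : ContinuousAt K 0) (hKsupp : HasCompactSupport K)
    (h hm : ℕ → ℝ) (hhpos : ∀ n, 0 < h n) (hhlim : Tendsto h atTop (nhds 0))
    (hmpos : ∀ m, 0 < hm m) (hmlim : Tendsto hm atTop (nhds 0))
    (c c' : ℕ → ℝ) (hclim : Tendsto c atTop (nhds 0))
    (hc'lim : Tendsto c' atTop (nhds 0)) :
    (∀ x, ∃ N : ℕ, ∀ n ≥ N, ∀ m ≥ N, x ∉ Bnm P Q K h hm c c' n m) ∧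
      Tendsto (fun nm : ℕ × ℕ => Q (Bnm P Q K h hm c c' nm.1 nm.2)) atTop (nhds 0) := by
  have hB : ∀ x, ∀ᶠ nm : ℕ × ℕ in atTop, x ∉ Bnm P Q K h hm c c' nm.1 nm.2 :=
    eventually_notMem_Bnm hP hQ hKpos hKcont hKsupp
      (tendsto_nhdsWithin_iff.2 ⟨hhlim, .of_forall hhpos⟩)
      (tendsto_nhdsWithin_iff.2 ⟨hmlim, .of_forall hmpos⟩) hclim hc'lim
  refine ⟨fun x => ?_, ?_⟩
  · obtain ⟨⟨N₁, N₂⟩, hN⟩ := eventually_atTop.1 (hB x)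
    exact ⟨max N₁ N₂, fun n hn m hm' =>
      hN (n, m) ⟨le_of_max_le_left hn, le_of_max_le_right hm'⟩⟩
  · have hmeas (nm : ℕ × ℕ) : MeasurableSet (Bnm P Q K h hm c c' nm.1 nm.2) :=
      measurableSet_Bnm P Q hK_meas h hm c c' nm.1 nm.2
    simpa only [measure_empty] using
      tendsto_measure_of_tendsto_indicator_of_isFiniteMeasure atTop Q (A := ∅) hmeas
        (fun x => (hB x).mono fun _ hx => iff_of_false hx (Set.notMem_empty x))

theorem stmt15 {d : ℕ} (P Q : Measure (EuclideanSpace ℝ (Fin d)))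
    [IsProbabilityMeasure P] [IsProbabilityMeasure Q]
    (hP : ∀ x ∈ msupp P,
      0 < liminf (fun r : ℝ => P (ball x r) / ENNReal.ofReal (r ^ d))
        (nhdsWithin (0 : ℝ) (Set.Ioi 0)))
    (hQ : ∀ y ∈ msupp Q,
      0 < liminf (fun r : ℝ => Q (ball y r) / ENNReal.ofReal (r ^ d))
        (nhdsWithin (0 : ℝ) (Set.Ioi 0)))
    (K : EuclideanSpace ℝ (Fin d) → ℝ) (hK_meas : Measurable K) (hK0 : ∀ y, 0 ≤ K y)
    (hKpos : 0 < K 0) (hKcont : ContinuousAt K 0) (hKsupp : HasCompactSupport K)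
    (h hm : ℕ → ℝ) (hhpos : ∀ n, 0 < h n) (hhlim : Tendsto h atTop (nhds 0))
    (hmpos : ∀ m, 0 < hm m) (hmlim : Tendsto hm atTop (nhds 0))
    (c c' : ℕ → ℝ) (hc0 : ∀ n, 0 ≤ c n) (hclim : Tendsto c atTop (nhds 0))
    (hc'0 : ∀ m, 0 ≤ c' m) (hc'lim : Tendsto c' atTop (nhds 0)) :
    (∀ x, ∃ N : ℕ, ∀ n ≥ N, ∀ m ≥ N, x ∉ Bnm P Q K h hm c c' n m) ∧
      Tendsto (fun nm : ℕ × ℕ => Q (Bnm P Q K h hm c c' nm.1 nm.2)) atTop (nhds 0) :=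
  stmt15_general P Q hP hQ K hK_meas hKpos hKcont hKsupp h hm hhpos hhlim hmpos hmlim c c' hclim
    hc'lim
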